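/- Suppose the tail assumption P(log((1-A)/A) > x) = x^{-α}L(x) for x > η holds with α > 1 and L slowly varying. Let Z_l be the l-th generation of the branching process in random i.i.d. environment (A_i) with geometric offspring and one immigrant per generation, Z_0 = 0, Z_n = ∑_{i=1}^{Z_{n-1}+1} B_{n,i} where conditionally on the environment the B_{n,i} are i.i.d. geometric with success probability A_{n-1}. Then for every l ≥ 2: limsup_{m→∞} P(Z_l ≥ m) / [(log^{(l)} m)^{-α} L(log^{(l)} m)] ≤ ∑_{t=0}^{l-1} α^{-αt}, where log^{(l)} denotes the l-fold iterated logarithm. -/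

import Mathlib

/-!
Let `G` be the event that the first `l` environments satisfy `(1 - A j) / A j ≤ e^c`.
Conditioning on the first `n` generations gives
`E[Z (n+1); G] = E[(Z n + 1) (1 - A n) / A n; G] ≤ e^c (E[Z n; G] + 1)`, hence `E[Z l; G] ≤ l e^{cl}`.
A union bound off `G` and Markov's inequality on `G` give
`P(Z l ≥ m) ≤ l P(log ((1 - A) / A) > c) + l e^{cl} / m`.
Take `c = l log^[l] m`. By slow variation of `L`, the first term is asymptotically `l^{1-α} < 1`
times `(log^[l] m)^{-α} L (log^[l] m)`. The second is a power of `log m` divided by `m`, which is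
negligible because slow variation also bounds the tail below by some `e^{-β x}`. So the limsup is
at most `1`, the term `t = 0` of the sum.
-/

open MeasureTheory ProbabilityTheory Filter Set
open scoped ENNReal Topology

def geomWeight (a : ℝ) (k : ℕ) : ℝ≥0∞ := ENNReal.ofReal (a * (1 - a) ^ k)

lemma tsum_natCast_mul_geomWeight {a : ℝ} (ha : a ∈ Ioo (0 : ℝ) 1) :
    ∑' k : ℕ, (k : ℝ≥0∞) * geomWeight a k = ENNReal.ofReal ((1 - a) / a) := by
  obtain ⟨ha0, ha1⟩ := ha
  have hr : ‖1 - a‖ < 1 := by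
    rw [Real.norm_eq_abs, abs_lt]; constructor <;> linarith
  have hsum := (hasSum_coe_mul_geometric_of_norm_lt_one hr).mul_left a
  rw [show a * ((1 - a) / (1 - (1 - a)) ^ 2) = (1 - a) / a by
    rw [sub_sub_cancel]; field_simp] at hsum
  have hnn : ∀ k : ℕ, 0 ≤ a * (k * (1 - a) ^ k) := fun k => by
    have : 0 ≤ 1 - a := by linarith
    positivity
  rw [← hsum.tsum_eq, ENNReal.ofReal_tsum_of_nonneg hnn hsum.summable]
  congr 1; ext k
  rw [geomWeight, mul_left_comm, ENNReal.ofReal_mul (Nat.cast_nonneg k), ENNReal.ofReal_natCast]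

lemma measure_biUnion_preimage_le_of_map_eq {Ω ι β : Type*} [MeasurableSpace Ω]
    [MeasurableSpace β] {ν : Measure Ω} {X : ι → Ω → β} (hX : ∀ i, Measurable (X i)) {i₀ : ι}
    (hident : ∀ i, ν.map (X i) = ν.map (X i₀)) {s : Set β} (hs : MeasurableSet s) (I : Finset ι) :
    ν (⋃ i ∈ I, X i ⁻¹' s) ≤ I.card * ν (X i₀ ⁻¹' s) :=
  calc ν (⋃ i ∈ I, X i ⁻¹' s) ≤ ∑ i ∈ I, ν (X i ⁻¹' s) := measure_biUnion_finset_le _ _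
    _ = ∑ _i ∈ I, ν (X i₀ ⁻¹' s) := Finset.sum_congr rfl fun i _ => by
        rw [← Measure.map_apply (hX i) hs, hident, Measure.map_apply (hX i₀) hs]
    _ = I.card * ν (X i₀ ⁻¹' s) := by rw [Finset.sum_const, nsmul_eq_mul]

section Offspring

variable {Ω : Type*}

def offspringCylinder (B : ℕ → ℕ → Ω → ℕ) (s : Finset (ℕ × ℕ)) (k : ℕ × ℕ → ℕ) : Set Ω :=
  {ω | ∀ p ∈ s, B p.1 p.2 ω = k p}

def offspringCylinders (B : ℕ → ℕ → Ω → ℕ) (n : ℕ) : Set (Set Ω) :=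
  {S | ∃ s k, (∀ p ∈ s, p.1 ≤ n) ∧ S = offspringCylinder B s k}

abbrev offspringSigma (B : ℕ → ℕ → Ω → ℕ) (n : ℕ) : MeasurableSpace Ω :=
  .generateFrom (offspringCylinders B n)

variable {B : ℕ → ℕ → Ω → ℕ}

lemma offspringCylinder_inter_preimage {s : Finset (ℕ × ℕ)} {q : ℕ × ℕ} (hq : q ∉ s)
    (k₀ : ℕ × ℕ → ℕ) (k : ℕ) :
    offspringCylinder B s k₀ ∩ B q.1 q.2 ⁻¹' {k} =
      offspringCylinder B (insert q s) (Function.update k₀ q k) := by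
  ext ω
  simp only [offspringCylinder, mem_inter_iff, mem_ofPred_eq, mem_preimage, mem_singleton_iff,
    Finset.forall_mem_insert, Function.update_self]
  have hupd : ∀ p ∈ s, Function.update k₀ q k p = k₀ p := fun p hp =>
    Function.update_of_ne (ne_of_mem_of_not_mem hp hq) _ _
  constructor
  · rintro ⟨hω, hBω⟩
    exact ⟨hBω, fun p hp => (hω p hp).trans (hupd p hp).symm⟩
  · rintro ⟨hBω, hω⟩
    exact ⟨fun p hp => (hω p hp).trans (hupd p hp), hBω⟩

lemma offspringSigma_mono : Monotone (offspringSigma (Ω := Ω) B) := fun _ _ hnn' =>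
  MeasurableSpace.generateFrom_le <| by
    rintro _ ⟨s, k, hs, rfl⟩
    exact .basic _ ⟨s, k, fun p hp => (hs p hp).trans hnn', rfl⟩

lemma isPiSystem_offspringCylinders (n : ℕ) : IsPiSystem (offspringCylinders (Ω := Ω) B n) := by
  rintro _ ⟨s₁, k₁, hs₁, rfl⟩ _ ⟨s₂, k₂, hs₂, rfl⟩ ⟨ω₀, h₁, h₂⟩
  -- on the intersection every `B p` with `p ∈ s₁ ∪ s₂` takes its value at `ω₀`
  refine ⟨s₁ ∪ s₂, fun p => B p.1 p.2 ω₀, ?_, ?_⟩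
  · intro p hp
    rcases Finset.mem_union.1 hp with hp | hp
    exacts [hs₁ p hp, hs₂ p hp]
  · ext ω
    simp only [offspringCylinder, mem_inter_iff, mem_ofPred_eq, Finset.mem_union]
    constructor
    · rintro ⟨hω₁, hω₂⟩ p (hp | hp)
      exacts [(hω₁ p hp).trans (h₁ p hp).symm, (hω₂ p hp).trans (h₂ p hp).symm]
    · intro hω
      exact ⟨fun p hp => (hω p (.inl hp)).trans (h₁ p hp),
        fun p hp => (hω p (.inr hp)).trans (h₂ p hp)⟩

lemma measurable_offspring_succ (n i : ℕ) : Measurable[offspringSigma B (n + 1)] (B (n + 1) i) :=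
  @measurable_to_countable' ℕ Ω _ _ (offspringSigma B (n + 1)) _ fun k =>
    .basic _ ⟨{(n + 1, i)}, fun _ => k, by simp, by ext ω; simp [offspringCylinder]⟩

variable {Z : ℕ → Ω → ℕ}

lemma measurable_offspringSigma_Z (hZ0 : ∀ ω, Z 0 ω = 0)
    (hZ : ∀ n ω, Z (n + 1) ω = ∑ i ∈ Finset.range (Z n ω + 1), B (n + 1) i ω) :
    ∀ n, Measurable[offspringSigma B n] (Z n)
  | 0 => by
    rw [show Z 0 = fun _ => 0 from funext hZ0]
    exact measurable_const
  | n + 1 => by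
    have hZn := (measurable_offspringSigma_Z hZ0 hZ n).mono (offspringSigma_mono n.le_succ) le_rfl
    rw [show Z (n + 1) = fun ω => ∑ i ∈ Finset.range (Z n ω + 1), B (n + 1) i ω from funext (hZ n)]
    exact (measurable_from_prod_countable_left (m := offspringSigma B (n + 1))
      (f := fun q : Ω × ℕ => ∑ i ∈ Finset.range (q.2 + 1), B (n + 1) i q.1) fun z =>
        Finset.measurable_sum (Finset.range (z + 1)) fun i _ => measurable_offspring_succ n i).comp
      (measurable_id.prodMk hZn)

variable [MeasurableSpace Ω]

/-- Conditionally on the environment `(A i)`, the offspring numbers `B n i` are independent and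
geometric: `P(B n i = k) = a (1 - a) ^ k` with `a = A (n - 1)`. -/
def HasGeometricOffspring (μ : Measure Ω) (A : ℤ → Ω → ℝ) (B : ℕ → ℕ → Ω → ℕ) : Prop :=
  ∀ (s : Finset (ℕ × ℕ)) (k : ℕ × ℕ → ℕ) (E : Set (ℤ → ℝ)), MeasurableSet E →
    μ (offspringCylinder B s k ∩ (fun ω i => A i ω) ⁻¹' E) =
      ∫⁻ ω in (fun ω i => A i ω) ⁻¹' E, ∏ p ∈ s, geomWeight (A ((p.1 : ℤ) - 1) ω) (k p) ∂μ

lemma measurableSet_offspringCylinder (hB : ∀ n i, Measurable (B n i)) (s : Finset (ℕ × ℕ))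
    (k : ℕ × ℕ → ℕ) : MeasurableSet (offspringCylinder B s k) := by
  have : offspringCylinder B s k = ⋂ p ∈ s, B p.1 p.2 ⁻¹' {k p} := by
    ext ω; simp [offspringCylinder]
  rw [this]
  exact .biInter s.countable_toSet fun p _ => hB p.1 p.2 (measurableSet_singleton _)

lemma offspringSigma_le (hB : ∀ n i, Measurable (B n i)) (n : ℕ) :
    offspringSigma B n ≤ ‹MeasurableSpace Ω› :=
  MeasurableSpace.generateFrom_le <| by
    rintro _ ⟨s, k, -, rfl⟩
    exact measurableSet_offspringCylinder hB s k

lemma measurable_Z (hB : ∀ n i, Measurable (B n i)) (hZ0 : ∀ ω, Z 0 ω = 0)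
    (hZ : ∀ n ω, Z (n + 1) ω = ∑ i ∈ Finset.range (Z n ω + 1), B (n + 1) i ω) (n : ℕ) :
    Measurable (Z n) :=
  (measurable_offspringSigma_Z hZ0 hZ n).mono (offspringSigma_le hB n) le_rfl

variable {μ : Measure Ω} {A : ℤ → Ω → ℝ}

lemma measurable_geomWeight (hA : ∀ i, Measurable (A i)) (j : ℤ) (k : ℕ) :
    Measurable fun ω => geomWeight (A j ω) k :=
  ENNReal.measurable_ofReal.comp ((hA j).mul ((measurable_const.sub (hA j)).pow_const k))

lemma setLIntegral_offspringCylinder_inter (hA : ∀ i, Measurable (A i))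
    (hgeom : HasGeometricOffspring μ A B) (s : Finset (ℕ × ℕ)) (k : ℕ × ℕ → ℕ)
    {E : Set (ℤ → ℝ)} (hE : MeasurableSet E) {φ : (ℤ → ℝ) → ℝ≥0∞} (hφ : Measurable φ) :
    ∫⁻ ω in offspringCylinder B s k ∩ (fun ω i => A i ω) ⁻¹' E, φ (fun i => A i ω) ∂μ =
      ∫⁻ ω in (fun ω i => A i ω) ⁻¹' E,
        (∏ p ∈ s, geomWeight (A ((p.1 : ℤ) - 1) ω) (k p)) * φ (fun i => A i ω) ∂μ := by
  have henv : Measurable fun ω i => A i ω := measurable_pi_lambda _ hA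
  have hdens : Measurable fun ω => ∏ p ∈ s, geomWeight (A ((p.1 : ℤ) - 1) ω) (k p) :=
    Finset.measurable_prod _ fun p _ => measurable_geomWeight hA _ _
  have hmap : (μ.restrict (offspringCylinder B s k)).map (fun ω i => A i ω) =
      (μ.withDensity fun ω => ∏ p ∈ s, geomWeight (A ((p.1 : ℤ) - 1) ω) (k p)).map
        (fun ω i => A i ω) := by
    ext F hF
    rw [Measure.map_apply henv hF, Measure.map_apply henv hF, Measure.restrict_apply (henv hF),
      withDensity_apply _ (henv hF), inter_comm]
    exact hgeom s k F hF
  have h := congrArg (fun ν => ∫⁻ a in E, φ a ∂ν) hmap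
  rwa [setLIntegral_map hE hφ henv, setLIntegral_map hE hφ henv,
    setLIntegral_withDensity_eq_setLIntegral_mul _ hdens (g := fun ω => φ fun i => A i ω)
      (hφ.comp henv) (henv hE),
    Measure.restrict_restrict (henv hE), inter_comm] at h

lemma restrict_offspringCylinder_eq_withDensity (hA : ∀ i, Measurable (A i))
    (hB : ∀ n i, Measurable (B n i)) (hgeom : HasGeometricOffspring μ A B) {n : ℕ} (i k : ℕ)
    {E : Set (ℤ → ℝ)} (hE : MeasurableSet E) {s : Finset (ℕ × ℕ)} (hs : ∀ p ∈ s, p.1 ≤ n)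
    (k₀ : ℕ × ℕ → ℕ) :
    μ.restrict (B (n + 1) i ⁻¹' {k} ∩ (fun ω i => A i ω) ⁻¹' E) (offspringCylinder B s k₀) =
      (μ.restrict ((fun ω i => A i ω) ⁻¹' E)).withDensity (fun ω => geomWeight (A n ω) k)
        (offspringCylinder B s k₀) := by
  have hcyl := measurableSet_offspringCylinder hB s k₀
  have hnew : (n + 1, i) ∉ s := fun h => by simpa using hs _ h
  rw [Measure.restrict_apply hcyl, ← inter_assoc, offspringCylinder_inter_preimage hnew,
    hgeom _ _ E hE, withDensity_apply _ hcyl, Measure.restrict_restrict hcyl,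
    setLIntegral_offspringCylinder_inter hA hgeom s k₀ hE (φ := fun a => geomWeight (a n) k)
      (measurable_geomWeight (A := fun i (a : ℤ → ℝ) => a i) measurable_pi_apply n k)]
  refine setLIntegral_congr_fun (measurable_pi_lambda _ hA hE) fun ω _ => ?_
  rw [Finset.prod_insert hnew, Function.update_self, mul_comm]
  congr 1
  · exact Finset.prod_congr rfl fun p hp => by
      rw [Function.update_of_ne (ne_of_mem_of_not_mem hp hnew)]
  · push_cast; simp

lemma measure_offspring_succ_eq [IsFiniteMeasure μ] (hA : ∀ i, Measurable (A i))
    (hB : ∀ n i, Measurable (B n i)) (hgeom : HasGeometricOffspring μ A B) {n : ℕ} (i k : ℕ)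
    {S : Set Ω} (hS : MeasurableSet[offspringSigma B n] S) {E : Set (ℤ → ℝ)}
    (hE : MeasurableSet E) :
    μ.restrict (S ∩ (fun ω i => A i ω) ⁻¹' E) (B (n + 1) i ⁻¹' {k}) =
      ∫⁻ ω in S ∩ (fun ω i => A i ω) ⁻¹' E, geomWeight (A n ω) k ∂μ := by
  set G := (fun ω i => A i ω) ⁻¹' E
  have hle := offspringSigma_le hB n
  -- both sides are measures in `S`, compared on the π-system generating `offspringSigma B n`
  have key : (μ.restrict (B (n + 1) i ⁻¹' {k} ∩ G)).trim hle =
      ((μ.restrict G).withDensity fun ω => geomWeight (A n ω) k).trim hle := by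
    refine ext_of_generate_finite _ rfl (isPiSystem_offspringCylinders n) ?_ ?_
    · rintro _ ⟨s, k₀, hs, rfl⟩
      rw [trim_measurableSet_eq hle (.basic _ ⟨s, k₀, hs, rfl⟩),
        trim_measurableSet_eq hle (.basic _ ⟨s, k₀, hs, rfl⟩)]
      exact restrict_offspringCylinder_eq_withDensity hA hB hgeom i k hE hs k₀
    · have huniv : (univ : Set Ω) = offspringCylinder B ∅ k := by simp [offspringCylinder]
      rw [trim_measurableSet_eq hle .univ, trim_measurableSet_eq hle .univ, huniv]
      exact restrict_offspringCylinder_eq_withDensity hA hB hgeom i k hE (by simp) k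
  have h := congrArg (fun ν => ν S) key
  rw [trim_measurableSet_eq hle hS, trim_measurableSet_eq hle hS,
    Measure.restrict_apply (hle _ hS), withDensity_apply _ (hle _ hS),
    Measure.restrict_restrict (hle _ hS), ← inter_assoc, inter_right_comm] at h
  rwa [Measure.restrict_apply (hB _ _ (measurableSet_singleton k)), inter_comm]

lemma setLIntegral_offspring_succ_eq [IsFiniteMeasure μ] (hA : ∀ i, Measurable (A i))
    (hB : ∀ n i, Measurable (B n i)) (hA01 : ∀ i ω, A i ω ∈ Ioo (0 : ℝ) 1)
    (hgeom : HasGeometricOffspring μ A B) {n : ℕ} (i : ℕ) {S : Set Ω}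
    (hS : MeasurableSet[offspringSigma B n] S) {E : Set (ℤ → ℝ)} (hE : MeasurableSet E) :
    ∫⁻ ω in S ∩ (fun ω i => A i ω) ⁻¹' E, (B (n + 1) i ω : ℝ≥0∞) ∂μ =
      ∫⁻ ω in S ∩ (fun ω i => A i ω) ⁻¹' E, ENNReal.ofReal ((1 - A n ω) / A n ω) ∂μ := by
  calc ∫⁻ ω in S ∩ (fun ω i => A i ω) ⁻¹' E, (B (n + 1) i ω : ℝ≥0∞) ∂μ
      = ∑' k : ℕ, k * μ.restrict (S ∩ (fun ω i => A i ω) ⁻¹' E) (B (n + 1) i ⁻¹' {k}) := by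
        rw [← lintegral_map (f := fun k : ℕ => (k : ℝ≥0∞)) measurable_from_top (hB _ _),
          lintegral_countable']
        simp_rw [Measure.map_apply (hB _ _) (measurableSet_singleton _)]
    _ = ∑' k : ℕ, ∫⁻ ω in S ∩ (fun ω i => A i ω) ⁻¹' E, k * geomWeight (A n ω) k ∂μ := by
        refine tsum_congr fun k => ?_
        rw [measure_offspring_succ_eq hA hB hgeom i k hS hE,
          lintegral_const_mul _ (measurable_geomWeight hA _ _)]
    _ = ∫⁻ ω in S ∩ (fun ω i => A i ω) ⁻¹' E, ∑' k : ℕ, k * geomWeight (A n ω) k ∂μ :=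
        (lintegral_tsum fun k => (measurable_geomWeight hA _ _).const_mul _ |>.aemeasurable).symm
    _ = _ := by simp_rw [tsum_natCast_mul_geomWeight (hA01 _ _)]

lemma setLIntegral_Z_succ [IsFiniteMeasure μ] (hA : ∀ i, Measurable (A i))
    (hB : ∀ n i, Measurable (B n i)) (hA01 : ∀ i ω, A i ω ∈ Ioo (0 : ℝ) 1)
    (hgeom : HasGeometricOffspring μ A B) (hZ0 : ∀ ω, Z 0 ω = 0)
    (hZ : ∀ n ω, Z (n + 1) ω = ∑ i ∈ Finset.range (Z n ω + 1), B (n + 1) i ω)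
    {E : Set (ℤ → ℝ)} (hE : MeasurableSet E) (n : ℕ) :
    ∫⁻ ω in (fun ω i => A i ω) ⁻¹' E, (Z (n + 1) ω : ℝ≥0∞) ∂μ =
      ∫⁻ ω in (fun ω i => A i ω) ⁻¹' E, (Z n ω + 1) * ENNReal.ofReal ((1 - A n ω) / A n ω) ∂μ := by
  set G := (fun ω i => A i ω) ⁻¹' E
  have hS z : MeasurableSet[offspringSigma B n] (Z n ⁻¹' {z}) :=
    measurable_offspringSigma_Z hZ0 hZ n (measurableSet_singleton z)
  have hmeas z : MeasurableSet (Z n ⁻¹' {z} ∩ G) :=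
    (offspringSigma_le hB n _ (hS z)).inter (measurable_pi_lambda _ hA hE)
  have hdisj : Pairwise (Function.onFun Disjoint fun z => Z n ⁻¹' {z} ∩ G) := fun z z' h =>
    (((disjoint_singleton.2 h).preimage (Z n)).inter_right G).inter_left G
  have hpart : G = ⋃ z, Z n ⁻¹' {z} ∩ G := by
    rw [← iUnion_inter, ← preimage_iUnion, iUnion_of_singleton, preimage_univ, univ_inter]
  have hρ : Measurable fun ω => ENNReal.ofReal ((1 - A n ω) / A n ω) :=
    ENNReal.measurable_ofReal.comp ((measurable_const.sub (hA _)).div (hA _))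
  rw [hpart, lintegral_iUnion hmeas hdisj, lintegral_iUnion hmeas hdisj]
  refine tsum_congr fun z => ?_
  calc ∫⁻ ω in Z n ⁻¹' {z} ∩ G, (Z (n + 1) ω : ℝ≥0∞) ∂μ
      = ∫⁻ ω in Z n ⁻¹' {z} ∩ G, ∑ i ∈ Finset.range (z + 1), (B (n + 1) i ω : ℝ≥0∞) ∂μ :=
        setLIntegral_congr_fun (hmeas z) fun ω hω => by
          rw [hZ, show Z n ω = z from hω.1]; push_cast; rfl
    _ = ∑ i ∈ Finset.range (z + 1), ∫⁻ ω in Z n ⁻¹' {z} ∩ G,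
          ENNReal.ofReal ((1 - A n ω) / A n ω) ∂μ := by
        rw [lintegral_finsetSum (f := fun i ω => (B (n + 1) i ω : ℝ≥0∞)) _
          fun i _ => measurable_from_top.comp (hB _ _)]
        exact Finset.sum_congr rfl fun i _ =>
          setLIntegral_offspring_succ_eq hA hB hA01 hgeom i (hS z) hE
    _ = ∫⁻ ω in Z n ⁻¹' {z} ∩ G, (Z n ω + 1) * ENNReal.ofReal ((1 - A n ω) / A n ω) ∂μ := by
        rw [Finset.sum_const, Finset.card_range, nsmul_eq_mul, ← lintegral_const_mul _ hρ]
        refine setLIntegral_congr_fun (hmeas z) fun ω hω => ?_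
        rw [show Z n ω = z from hω.1]
        push_cast; rfl

lemma setLIntegral_Z_le [IsProbabilityMeasure μ] (hA : ∀ i, Measurable (A i))
    (hB : ∀ n i, Measurable (B n i)) (hA01 : ∀ i ω, A i ω ∈ Ioo (0 : ℝ) 1)
    (hgeom : HasGeometricOffspring μ A B) (hZ0 : ∀ ω, Z 0 ω = 0)
    (hZ : ∀ n ω, Z (n + 1) ω = ∑ i ∈ Finset.range (Z n ω + 1), B (n + 1) i ω)
    {C : ℝ} (hC : 1 ≤ C) {l : ℕ} {E : Set (ℤ → ℝ)} (hE : MeasurableSet E)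
    (hEC : ∀ a ∈ E, ∀ j < l, (1 - a j) / a j ≤ C) :
    ∀ n ≤ l, ∫⁻ ω in (fun ω i => A i ω) ⁻¹' E, (Z n ω : ℝ≥0∞) ∂μ ≤ n * ENNReal.ofReal C ^ n
  | 0, _ => by simp [hZ0]
  | n + 1, hn => by
    set c := ENNReal.ofReal C
    have hc : 1 ≤ c := ENNReal.one_le_ofReal.2 hC
    have hZn : Measurable fun ω => (Z n ω : ℝ≥0∞) :=
      measurable_from_top.comp (measurable_Z hB hZ0 hZ n)
    calc ∫⁻ ω in (fun ω i => A i ω) ⁻¹' E, (Z (n + 1) ω : ℝ≥0∞) ∂μ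
        = ∫⁻ ω in (fun ω i => A i ω) ⁻¹' E,
            (Z n ω + 1) * ENNReal.ofReal ((1 - A n ω) / A n ω) ∂μ :=
          setLIntegral_Z_succ hA hB hA01 hgeom hZ0 hZ hE n
      _ ≤ ∫⁻ ω in (fun ω i => A i ω) ⁻¹' E, (Z n ω + 1) * c ∂μ :=
          setLIntegral_mono ((hZn.add_const 1).mul_const c) fun ω hω => by
            gcongr
            exact ENNReal.ofReal_le_ofReal (hEC _ hω n hn)
      _ = (∫⁻ ω in (fun ω i => A i ω) ⁻¹' E, (Z n ω : ℝ≥0∞) ∂μ +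
            μ ((fun ω i => A i ω) ⁻¹' E)) * c := by
          rw [lintegral_mul_const _ (hZn.add_const 1), lintegral_add_right _ measurable_const,
            setLIntegral_const, one_mul]
      _ ≤ (n * c ^ n + 1) * c := by
          gcongr
          · exact setLIntegral_Z_le hA hB hA01 hgeom hZ0 hZ hC hE hEC n (by omega)
          · exact prob_le_one
      _ ≤ (n + 1 : ℕ) * c ^ (n + 1) := by
          have : c ≤ c ^ (n + 1) := le_self_pow₀ hc (by omega)
          calc (n * c ^ n + 1) * c = n * c ^ (n + 1) + c := by ring
            _ ≤ n * c ^ (n + 1) + c ^ (n + 1) := by gcongr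
            _ = (n + 1 : ℕ) * c ^ (n + 1) := by push_cast; ring

lemma measure_Z_ge_le [IsProbabilityMeasure μ] (hA : ∀ i, Measurable (A i))
    (hB : ∀ n i, Measurable (B n i)) (hA01 : ∀ i ω, A i ω ∈ Ioo (0 : ℝ) 1)
    (hident : ∀ i, μ.map (A i) = μ.map (A 0)) (hgeom : HasGeometricOffspring μ A B)
    (hZ0 : ∀ ω, Z 0 ω = 0)
    (hZ : ∀ n ω, Z (n + 1) ω = ∑ i ∈ Finset.range (Z n ω + 1), B (n + 1) i ω)
    {C : ℝ} (hC : 1 ≤ C) (l : ℕ) {m : ℕ} (hm : m ≠ 0) :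
    μ {ω | m ≤ Z l ω} ≤
      l * μ {ω | C < (1 - A 0 ω) / A 0 ω} + l * ENNReal.ofReal C ^ l / m := by
  set E := {a : ℤ → ℝ | ∀ j < l, (1 - a j) / a j ≤ C}
  set G := (fun ω i => A i ω) ⁻¹' E
  have hodds : Measurable fun x : ℝ => (1 - x) / x :=
    (measurable_const.sub measurable_id).div measurable_id
  have hE : MeasurableSet E := by
    simp only [E, ofPred_forall]
    exact .iInter fun j => .iInter fun _ =>
      measurableSet_le (hodds.comp (measurable_pi_apply _)) measurable_const
  have hbad : μ Gᶜ ≤ l * μ {ω | C < (1 - A 0 ω) / A 0 ω} := by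
    have hGc : Gᶜ = ⋃ j ∈ Finset.range l, A j ⁻¹' {x | C < (1 - x) / x} := by
      ext ω; simp [G, E]
    simpa [hGc] using measure_biUnion_preimage_le_of_map_eq hA hident
      (measurableSet_lt measurable_const hodds) ((Finset.range l).map ⟨_, Nat.cast_injective⟩)
  have hZl : Measurable fun ω => (Z l ω : ℝ≥0∞) :=
    measurable_from_top.comp (measurable_Z hB hZ0 hZ l)
  have hgood : μ ({ω | m ≤ Z l ω} ∩ G) ≤ l * ENNReal.ofReal C ^ l / m :=
    calc μ ({ω | m ≤ Z l ω} ∩ G) = μ.restrict G {ω | (m : ℝ≥0∞) ≤ Z l ω} := by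
          rw [Measure.restrict_apply (measurableSet_le measurable_const hZl)]
          simp only [Nat.cast_le]
      _ ≤ (∫⁻ ω in G, (Z l ω : ℝ≥0∞) ∂μ) / m :=
          meas_ge_le_lintegral_div hZl.aemeasurable (by simpa using hm) (ENNReal.natCast_ne_top m)
      _ ≤ l * ENNReal.ofReal C ^ l / m := by
          gcongr
          exact setLIntegral_Z_le hA hB hA01 hgeom hZ0 hZ hC hE (fun _ ha => ha) l le_rfl
  calc μ {ω | m ≤ Z l ω} ≤ μ ({ω | m ≤ Z l ω} ∩ G) + μ ({ω | m ≤ Z l ω} \ G) :=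
        measure_le_inter_add_sdiff _ _ _
    _ ≤ l * ENNReal.ofReal C ^ l / m + l * μ {ω | C < (1 - A 0 ω) / A 0 ω} :=
        add_le_add hgood ((measure_mono (sdiff_subset_compl _ _)).trans hbad)
    _ = _ := add_comm _ _

lemma toReal_measure_Z_ge_le [IsProbabilityMeasure μ] (hA : ∀ i, Measurable (A i))
    (hB : ∀ n i, Measurable (B n i)) (hA01 : ∀ i ω, A i ω ∈ Ioo (0 : ℝ) 1)
    (hident : ∀ i, μ.map (A i) = μ.map (A 0)) (hgeom : HasGeometricOffspring μ A B)
    (hZ0 : ∀ ω, Z 0 ω = 0)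
    (hZ : ∀ n ω, Z (n + 1) ω = ∑ i ∈ Finset.range (Z n ω + 1), B (n + 1) i ω)
    {c : ℝ} (hc : 0 ≤ c) (l : ℕ) {m : ℕ} (hm : m ≠ 0) :
    (μ {ω | m ≤ Z l ω}).toReal ≤
      l * (μ {ω | c < Real.log ((1 - A 0 ω) / A 0 ω)}).toReal + l * Real.exp (l * c) / m := by
  have hset : {ω | c < Real.log ((1 - A 0 ω) / A 0 ω)} =
      {ω | Real.exp c < (1 - A 0 ω) / A 0 ω} := by
    ext ω
    obtain ⟨h0, h1⟩ := hA01 0 ω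
    exact Real.lt_log_iff_exp_lt (div_pos (by linarith) h0)
  have h := measure_Z_ge_le hA hB hA01 hident hgeom hZ0 hZ (Real.one_le_exp hc) l hm
  rw [hset, Real.exp_nat_mul]
  refine (ENNReal.toReal_mono (by finiteness) h).trans_eq ?_
  rw [ENNReal.toReal_add (by finiteness) (by finiteness)]
  simp [ENNReal.toReal_ofReal (Real.exp_pos c).le]

end Offspring

lemma exists_mul_exp_le_of_antitone {f : ℝ → ℝ} (hf : Antitone f) {x₀ β : ℝ} (hβ : 0 ≤ β)
    (hfx₀ : 0 < f x₀) (hstep : ∀ x ≥ x₀, Real.exp (-β) * f x ≤ f (x + 1)) :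
    ∃ c > 0, ∀ x ≥ x₀, c * Real.exp (-(β * x)) ≤ f x := by
  have hnat (n : ℕ) : Real.exp (-(β * n)) * f x₀ ≤ f (x₀ + n) := by
    induction n with
    | zero => simp
    | succ n ih =>
      calc Real.exp (-(β * (n + 1 : ℕ))) * f x₀ = Real.exp (-β) * (Real.exp (-(β * n)) * f x₀) := by
            rw [← mul_assoc, ← Real.exp_add]; push_cast; ring_nf
        _ ≤ Real.exp (-β) * f (x₀ + n) := by gcongr
        _ ≤ f (x₀ + n + 1) := hstep _ (by simp)
        _ = f (x₀ + (n + 1 : ℕ)) := by push_cast; ring_nf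
  refine ⟨f x₀ * Real.exp (-(β * (1 - x₀))), by positivity, fun x hx => ?_⟩
  have hn : (⌈x - x₀⌉₊ : ℝ) < x - x₀ + 1 := Nat.ceil_lt_add_one (by linarith)
  calc f x₀ * Real.exp (-(β * (1 - x₀))) * Real.exp (-(β * x))
      = Real.exp (-(β * (x - x₀ + 1))) * f x₀ := by
        rw [mul_assoc, ← Real.exp_add, mul_comm]; ring_nf
    _ ≤ Real.exp (-(β * ⌈x - x₀⌉₊)) * f x₀ := by gcongr
    _ ≤ f (x₀ + ⌈x - x₀⌉₊) := hnat _
    _ ≤ f x := hf (by linarith [Nat.le_ceil (x - x₀)])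

lemma tendsto_iterate_log_atTop : ∀ j : ℕ, Tendsto (Real.log^[j]) atTop atTop
  | 0 => tendsto_id
  | j + 1 => (tendsto_iterate_log_atTop j).comp Real.tendsto_log_atTop

lemma eventually_iterate_log_le_log {j : ℕ} (hj : 1 ≤ j) :
    ∀ᶠ x in atTop, Real.log^[j] x ≤ Real.log x := by
  induction j, hj using Nat.le_induction with
  | base => simp
  | succ j _ ih =>
    filter_upwards [ih, (tendsto_iterate_log_atTop j).eventually_ge_atTop 0] with x h h0
    rw [Function.iterate_succ_apply']
    exact (Real.log_le_self h0).trans h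

lemma tendsto_exp_mul_iterate_log_div {T : ℝ → ℝ} {β c : ℝ} (hc : 0 < c)
    (hT : ∀ᶠ x in atTop, c * Real.exp (-(β * x)) ≤ T x) {l : ℕ} (hl : 2 ≤ l) (K : ℝ) :
    Tendsto (fun m : ℕ => Real.exp (K * Real.log^[l] m) / m / T (Real.log^[l] m)) atTop (𝓝 0) := by
  obtain ⟨r, rfl⟩ : ∃ r, l = r + 1 := ⟨l - 1, by omega⟩
  set N := ⌈K + β⌉₊
  have hlim : Tendsto (fun m : ℕ => c⁻¹ * (Real.log m ^ N / m)) atTop (𝓝 0) := by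
    have := (Real.tendsto_pow_log_div_mul_add_atTop 1 0 N one_ne_zero).comp
      tendsto_natCast_atTop_atTop
    simpa using this.const_mul c⁻¹
  have hv := (tendsto_iterate_log_atTop (r + 1)).comp tendsto_natCast_atTop_atTop
  refine squeeze_zero' ?_ ?_ hlim
  · filter_upwards [hv.eventually hT, hv.eventually_ge_atTop 0] with m hTm hv0
    simp only [Function.comp] at hTm hv0
    have := (mul_pos hc (Real.exp_pos (-(β * Real.log^[r + 1] m)))).trans_le hTm
    positivity
  · have hw := (tendsto_iterate_log_atTop r).comp tendsto_natCast_atTop_atTop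
    filter_upwards [hv.eventually hT, hv.eventually_ge_atTop 0, hw.eventually_gt_atTop 0,
      tendsto_natCast_atTop_atTop.eventually (eventually_iterate_log_le_log (j := r) (by omega)),
      eventually_ge_atTop 1] with m hTm hv0 hw0 hwlog hm
    simp only [Function.comp] at hTm hv0 hw0 hwlog
    set v := Real.log^[r + 1] (m : ℝ)
    have hexp : Real.exp v = Real.log^[r] m := by
      rw [show v = Real.log (Real.log^[r] m) from Function.iterate_succ_apply' _ _ _,
        Real.exp_log hw0]
    have hm0 : (0 : ℝ) < m := by exact_mod_cast hm
    have hcT : 0 < c * Real.exp (-(β * v)) := by positivity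
    calc Real.exp (K * v) / m / T v ≤ Real.exp (K * v) / m / (c * Real.exp (-(β * v))) := by
          gcongr
      _ = c⁻¹ * (Real.exp ((K + β) * v) / m) := by
          rw [add_mul, Real.exp_add, Real.exp_neg]; field_simp
      _ ≤ c⁻¹ * (Real.exp (N * v) / m) := by
          gcongr
          exact Nat.le_ceil _
      _ = c⁻¹ * ((Real.log^[r] m) ^ N / m) := by rw [Real.exp_nat_mul, hexp]
      _ ≤ c⁻¹ * (Real.log m ^ N / m) := by gcongr

lemma mul_rpow_neg_lt_one {x α : ℝ} (hx : 1 < x) (hα : 1 < α) : x * x ^ (-α) < 1 :=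
  calc x * x ^ (-α) < x * x ^ (-1 : ℝ) := by
        gcongr
        exact Real.rpow_lt_rpow_of_exponent_lt hx (by linarith)
    _ = 1 := by rw [Real.rpow_neg_one, mul_inv_cancel₀ (by positivity)]

section RegularVariation

variable {T L : ℝ → ℝ} {α η : ℝ}

lemma pos_of_eq_rpow_mul (hTL : ∀ x > η, T x = x ^ (-α) * L x) (hLpos : ∀ x, 0 < L x) {x : ℝ}
    (hη : η < x) (hx : 0 < x) : 0 < T x := by
  rw [hTL x hη]
  exact mul_pos (Real.rpow_pos_of_pos hx _) (hLpos x)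

lemma tendsto_div_of_eq_rpow_mul (hTL : ∀ x > η, T x = x ^ (-α) * L x) (hLpos : ∀ x, 0 < L x)
    {t : ℝ} (ht : 0 < t) (hLt : Tendsto (fun x => L (t * x) / L x) atTop (𝓝 1)) :
    Tendsto (fun x => T (t * x) / T x) atTop (𝓝 (t ^ (-α))) := by
  have h := hLt.const_mul (t ^ (-α))
  rw [mul_one] at h
  refine h.congr' ?_
  filter_upwards [eventually_gt_atTop (max η 0),
    (tendsto_id.const_mul_atTop ht).eventually_gt_atTop (max η 0)] with x hx htx
  simp only [id, max_lt_iff] at hx htx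
  rw [hTL x hx.1, hTL _ htx.1, Real.mul_rpow ht.le hx.2.le]
  have := (Real.rpow_pos_of_pos hx.2 (-α)).ne'
  have := (hLpos x).ne'
  field_simp

lemma exists_mul_exp_le_of_eq_rpow_mul (hα : 0 ≤ α) (hT : Antitone T)
    (hTL : ∀ x > η, T x = x ^ (-α) * L x) (hLpos : ∀ x, 0 < L x)
    (hL2 : Tendsto (fun x => L (2 * x) / L x) atTop (𝓝 1)) :
    ∃ β c : ℝ, 0 < c ∧ ∀ᶠ x in atTop, c * Real.exp (-(β * x)) ≤ T x := by
  set q : ℝ := 2 ^ (-α) / 2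
  have hq : 0 < q := by positivity
  have hq1 : q ≤ 1 := by
    have : (2 : ℝ) ^ (-α) ≤ 1 := Real.rpow_le_one_of_one_le_of_nonpos one_le_two (by linarith)
    simp only [q]; linarith
  have hq2 : q < 2 ^ (-α) := by
    simp only [q]; linarith [Real.rpow_pos_of_pos two_pos (-α)]
  obtain ⟨x₀, hx₀⟩ := eventually_atTop.1 <|
    ((tendsto_div_of_eq_rpow_mul hTL hLpos two_pos hL2).eventually (lt_mem_nhds hq2)).and
      ((eventually_gt_atTop η).and (eventually_ge_atTop 1))
  have hTpos : 0 < T x₀ := by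
    obtain ⟨-, hη, h1⟩ := hx₀ x₀ le_rfl
    exact pos_of_eq_rpow_mul hTL hLpos hη (by linarith)
  obtain ⟨c, hc, hcT⟩ := exists_mul_exp_le_of_antitone hT (β := -Real.log q)
    (neg_nonneg.2 (Real.log_nonpos hq.le hq1)) hTpos fun x hx => by
      obtain ⟨hratio, hη, h1⟩ := hx₀ x hx
      have hTx : 0 < T x := pos_of_eq_rpow_mul hTL hLpos hη (by linarith)
      rw [neg_neg, Real.exp_log hq]
      calc q * T x ≤ T (2 * x) := ((lt_div_iff₀ hTx).1 hratio).le
        _ ≤ T (x + 1) := hT (by linarith)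
  exact ⟨-Real.log q, c, hc, eventually_atTop.2 ⟨x₀, hcT⟩⟩

lemma limsup_div_iterate_log_le_one (hα : 1 < α) (hT : Antitone T)
    (hTL : ∀ x > η, T x = x ^ (-α) * L x) (hLpos : ∀ x, 0 < L x)
    (hsv : ∀ t > (0 : ℝ), Tendsto (fun x => L (t * x) / L x) atTop (𝓝 1))
    {l : ℕ} (hl : 2 ≤ l) {p : ℕ → ℝ} (hp0 : ∀ m, 0 ≤ p m)
    (hp : ∀ m ≠ 0, ∀ c ≥ 0, p m ≤ l * T c + l * Real.exp (l * c) / m) :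
    limsup (fun m : ℕ => p m / ((Real.log^[l] m) ^ (-α) * L (Real.log^[l] m))) atTop ≤ 1 := by
  have hv := (tendsto_iterate_log_atTop l).comp tendsto_natCast_atTop_atTop
  obtain ⟨β, c, hc, hlow⟩ :=
    exists_mul_exp_le_of_eq_rpow_mul (by linarith) hT hTL hLpos (hsv 2 two_pos)
  have hl1 : (1 : ℝ) < l := by exact_mod_cast hl
  have hl0 : (0 : ℝ) < l := by linarith
  have hTpos : ∀ x > max η 0, 0 < T x := fun x hx =>
    pos_of_eq_rpow_mul hTL hLpos ((le_max_left _ _).trans_lt hx) ((le_max_right _ _).trans_lt hx)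
  -- the threshold in `hp` is taken to be `l * log^[l] m`
  have hlim : Tendsto (fun m : ℕ => l * (T (l * Real.log^[l] m) / T (Real.log^[l] m)) +
      l * (Real.exp ((l * l) * Real.log^[l] m) / m / T (Real.log^[l] m))) atTop
      (𝓝 (l * l ^ (-α) + l * 0)) :=
    (((tendsto_div_of_eq_rpow_mul hTL hLpos hl0 (hsv l hl0)).comp hv).const_mul _).add
      ((tendsto_exp_mul_iterate_log_div hc hlow hl _).const_mul _)
  have hlt : (l : ℝ) * l ^ (-α) + l * 0 < 1 := by simpa using mul_rpow_neg_lt_one hl1 hα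
  refine limsup_le_of_le (isCoboundedUnder_le_of_eventually_le _ (x := 0) ?_) ?_
  · filter_upwards [hv.eventually_gt_atTop (max η 0)] with m hm
    have hη : η < Real.log^[l] m := (le_max_left _ _).trans_lt hm
    rw [← hTL _ hη]
    exact div_nonneg (hp0 m) (hTpos _ hm).le
  · filter_upwards [hlim.eventually (gt_mem_nhds hlt), hv.eventually_gt_atTop (max η 0),
      eventually_ne_atTop 0] with m hm hvη hm0
    simp only [Function.comp] at hvη
    set v := Real.log^[l] (m : ℝ)
    have hη : η < v := (le_max_left _ _).trans_lt hvη
    have hv0 : 0 < v := (le_max_right _ _).trans_lt hvη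
    rw [← hTL _ hη]
    calc p m / T v ≤ (l * T (l * v) + l * Real.exp (l * (l * v)) / m) / T v := by
          gcongr
          · exact (hTpos _ hvη).le
          · exact hp m hm0 _ (by positivity)
      _ = l * (T (l * v) / T v) + l * (Real.exp ((l * l) * v) / m / T v) := by
          rw [mul_assoc]; ring
      _ ≤ 1 := hm.le

end RegularVariation

theorem bpre_tail_upper_general
    {Ω : Type*} [MeasurableSpace Ω] (μ : Measure Ω) [IsProbabilityMeasure μ]
    (A : ℤ → Ω → ℝ) (B : ℕ → ℕ → Ω → ℕ) (Z : ℕ → Ω → ℕ)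
    (α η : ℝ) (hα : 1 < α)
    (L : ℝ → ℝ) (hLpos : ∀ x, 0 < L x)
    (hsv : ∀ t > (0:ℝ), Tendsto (fun x => L (t * x) / L x) atTop (nhds 1))
    (hmeasA : ∀ i, Measurable (A i)) (hmeasB : ∀ n i, Measurable (B n i))
    (hA01 : ∀ i ω, A i ω ∈ Set.Ioo (0:ℝ) 1)
    (hident : ∀ i, Measure.map (A i) μ = Measure.map (A 0) μ)
    (htail : ∀ x > η,
      (μ {ω | x < Real.log ((1 - A 0 ω) / A 0 ω)}).toReal = x ^ (-α) * L x)
    (hZ0 : ∀ ω, Z 0 ω = 0)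
    (hZrec : ∀ n ω, Z (n + 1) ω = ∑ i ∈ Finset.range (Z n ω + 1), B (n + 1) i ω)
    (hcond : ∀ (s : Finset (ℕ × ℕ)) (k : ℕ × ℕ → ℕ) (E : Set (ℤ → ℝ)),
      MeasurableSet E →
      μ {ω | (∀ p ∈ s, B p.1 p.2 ω = k p) ∧ (fun i => A i ω) ∈ E}
        = ∫⁻ ω in {ω | (fun i => A i ω) ∈ E},
            ∏ p ∈ s, ENNReal.ofReal
              (A ((p.1 : ℤ) - 1) ω * (1 - A ((p.1 : ℤ) - 1) ω) ^ k p) ∂μ)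
    (l : ℕ) (hl : 2 ≤ l) :
    Filter.limsup
      (fun m : ℕ =>
        (μ {ω | m ≤ Z l ω}).toReal /
          ((Real.log^[l] m) ^ (-α) * L (Real.log^[l] m)))
      atTop
      ≤ ∑ t ∈ Finset.range l, α ^ (-α * (t : ℝ)) := by
  have hT : Antitone fun x => (μ {ω | x < Real.log ((1 - A 0 ω) / A 0 ω)}).toReal :=
    fun x y hxy => ENNReal.toReal_mono (measure_ne_top _ _)
      (measure_mono fun ω (h : y < _) => hxy.trans_lt h)
  calc _ ≤ 1 := limsup_div_iterate_log_le_one hα hT htail hLpos hsv hl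
        (fun _ => ENNReal.toReal_nonneg) fun m hm c hc =>
          toReal_measure_Z_ge_le hmeasA hmeasB hA01 hident hcond hZ0 hZrec hc l hm
    _ ≤ ∑ t ∈ Finset.range l, α ^ (-α * (t : ℝ)) := by
        have h := Finset.single_le_sum (f := fun t : ℕ => α ^ (-α * (t : ℝ)))
          (fun t _ => Real.rpow_nonneg (by linarith) _) (Finset.mem_range.2 (by omega : 0 < l))
        simpa using h

theorem bpre_tail_upper
    {Ω : Type*} [MeasurableSpace Ω] (μ : Measure Ω) [IsProbabilityMeasure μ]
    (A : ℤ → Ω → ℝ) (B : ℕ → ℕ → Ω → ℕ) (Z : ℕ → Ω → ℕ)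
    (α η : ℝ) (hα : 1 < α) (hη : 0 < η)
    (L : ℝ → ℝ) (hLpos : ∀ x, 0 < L x) (hLmeas : Measurable L)
    (hsv : ∀ t > (0:ℝ), Tendsto (fun x => L (t * x) / L x) atTop (nhds 1))
    (hmeasA : ∀ i, Measurable (A i)) (hmeasB : ∀ n i, Measurable (B n i))
    (hA01 : ∀ i ω, A i ω ∈ Set.Ioo (0:ℝ) 1)
    (hiid : iIndepFun A μ)
    (hident : ∀ i, Measure.map (A i) μ = Measure.map (A 0) μ)
    (htail : ∀ x > η,
      (μ {ω | x < Real.log ((1 - A 0 ω) / A 0 ω)}).toReal = x ^ (-α) * L x)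
    (hmean : ∫ ω, Real.log ((1 - A 0 ω) / A 0 ω) ∂μ < 0)
    (hZ0 : ∀ ω, Z 0 ω = 0)
    (hZrec : ∀ n ω, Z (n + 1) ω = ∑ i ∈ Finset.range (Z n ω + 1), B (n + 1) i ω)
    (hcond : ∀ (s : Finset (ℕ × ℕ)) (k : ℕ × ℕ → ℕ) (E : Set (ℤ → ℝ)),
      MeasurableSet E →
      μ {ω | (∀ p ∈ s, B p.1 p.2 ω = k p) ∧ (fun i => A i ω) ∈ E}
        = ∫⁻ ω in {ω | (fun i => A i ω) ∈ E},
            ∏ p ∈ s, ENNReal.ofReal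
              (A ((p.1 : ℤ) - 1) ω * (1 - A ((p.1 : ℤ) - 1) ω) ^ k p) ∂μ)
    (l : ℕ) (hl : 2 ≤ l) :
    Filter.limsup
      (fun m : ℕ =>
        (μ {ω | m ≤ Z l ω}).toReal /
          ((Real.log^[l] m) ^ (-α) * L (Real.log^[l] m)))
      atTop
      ≤ ∑ t ∈ Finset.range l, α ^ (-α * (t : ℝ)) :=
  bpre_tail_upper_general μ A B Z α η hα L hLpos hsv hmeasA hmeasB hA01 hident htail hZ0 hZrec hcond
    l hl
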